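/- Let (g_n)_{n≥1} be a sequence in L¹[0,1] with ‖g_n‖₁ = 1 for all n and pairwise disjoint supports. For t ∈ (1,2), let C_t := { s₁(t−1)g₁ + Σ_{n≥2} s_n g_n : s_n ≥ 0 for all n, Σ_{n≥1} s_n = 1 }. Then the sequence (g_n)_{n≥2} lies in C_t, converges to 0 Lebesgue-almost everywhere, and for every h ∈ C_t, limsup_n ‖g_n − h‖₁ ≥ t; since limsup_n ‖g_n − 0‖₁ = 1, this shows that the coefficient t(C_t) (the infimum of all λ ≥ 0 such that for every sequence (x_n) ⊆ C_t converging a.e. to some x ∈ L¹[0,1], inf_{c∈C_t} limsup_n ‖c − x_n‖₁ ≤ λ·limsup_n ‖x − x_n‖₁) satisfies t(C_t) ≥ t. -/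

import Mathlib

/-!
Expand `h ∈ C_t` as `h = ∑ aₙ gₙ` with `a₀ = (t - 1) s₀` and `aₙ = sₙ` otherwise. Since the
`gₙ` are disjointly supported, `‖h‖ = ∑ |aₙ| = 1 - (2 - t) s₀ ∈ [t - 1, 1]`, and `g_m` is
disjoint from every partial sum of the series once `m` is large, so `‖g_m - h‖ → 1 + ‖h‖ ≥ t`.
Disjointness also makes `gₙ → 0` a.e., while `‖gₙ - 0‖ = 1`: testing the definition of `t(C_t)`
on this sequence gives `t(C_t) ≥ t`. The set of admissible `λ` is nonempty (it contains `2`,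
witnessed by `c = x_N`) because `C_t` is bounded.
-/

open MeasureTheory Filter Topology

/-- Lebesgue measure on `[0,1]`. -/
noncomputable def μ01 : Measure ℝ := volume.restrict (Set.Icc 0 1)

instance : IsFiniteMeasure μ01 := by
  constructor
  simp [μ01, Real.volume_Icc]

/-- The set `C_t = { s₁(t-1)g₁ + Σ_{n≥2} s_n g_n : s_n ≥ 0, Σ s_n = 1 }` (here the sequence
`g` is indexed from `0`, so `g 0` plays the role of `g₁`). -/
noncomputable def Ct (g : ℕ → Lp ℝ 1 μ01) (t : ℝ) : Set (Lp ℝ 1 μ01) :=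
  {f | ∃ s : ℕ → ℝ, (∀ n, 0 ≤ s n) ∧ (∑' n, s n) = 1 ∧
    f = ((t - 1) * s 0) • g 0 + ∑' n : ℕ, s (n + 1) • g (n + 1)}

/-- The coefficient `t(C)` of a set `C ⊆ L¹[0,1]`, relative to a.e. convergence. -/
noncomputable def tCoef (C : Set (Lp ℝ 1 μ01)) : ℝ :=
  sInf {l : ℝ | 0 ≤ l ∧ ∀ (xs : ℕ → Lp ℝ 1 μ01) (x : Lp ℝ 1 μ01),
    (∀ n, xs n ∈ C) →
    (∀ᵐ t' ∂μ01, Tendsto (fun n => (xs n : ℝ → ℝ) t') atTop (𝓝 ((x : ℝ → ℝ) t'))) →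
    sInf ((fun c => limsup (fun n => ‖c - xs n‖) atTop) '' C) ≤
      l * limsup (fun n => ‖x - xs n‖) atTop}

namespace MeasureTheory.Lp

variable {α E : Type*} {m : MeasurableSpace α} {μ : Measure α} [NormedAddCommGroup E]

theorem norm_add_of_ae_disjoint {f k : Lp E 1 μ} (h : ∀ᵐ x ∂μ, f x = 0 ∨ k x = 0) :
    ‖f + k‖ = ‖f‖ + ‖k‖ := by
  simp only [L1.norm_eq_integral_norm]
  rw [← integral_add (L1.integrable_coeFn f).norm (L1.integrable_coeFn k).norm]
  refine integral_congr_ae ?_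
  filter_upwards [Lp.coeFn_add f k, h] with x hadd hx
  rcases hx with hx | hx <;> rw [hadd, Pi.add_apply, hx] <;> simp

theorem norm_sub_of_ae_disjoint {f k : Lp E 1 μ} (h : ∀ᵐ x ∂μ, f x = 0 ∨ k x = 0) :
    ‖f - k‖ = ‖f‖ + ‖k‖ := by
  rw [sub_eq_add_neg, norm_add_of_ae_disjoint, norm_neg]
  filter_upwards [h, Lp.coeFn_neg k] with x hx hneg
  rwa [hneg, Pi.neg_apply, neg_eq_zero]

theorem ae_disjoint_add_right {f k₁ k₂ : Lp E 1 μ} (h₁ : ∀ᵐ x ∂μ, f x = 0 ∨ k₁ x = 0)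
    (h₂ : ∀ᵐ x ∂μ, f x = 0 ∨ k₂ x = 0) : ∀ᵐ x ∂μ, f x = 0 ∨ (k₁ + k₂ : Lp E 1 μ) x = 0 := by
  filter_upwards [h₁, h₂, Lp.coeFn_add k₁ k₂] with x hx₁ hx₂ hadd
  rw [hadd, Pi.add_apply]
  rcases hx₁ with hx₁ | hx₁
  · exact .inl hx₁
  · rcases hx₂ with hx₂ | hx₂
    · exact .inl hx₂
    · exact .inr (by rw [hx₁, hx₂, add_zero])

theorem ae_disjoint_sum_right {ι : Type*} {f : Lp E 1 μ} {k : ι → Lp E 1 μ} {s : Finset ι}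
    (h : ∀ i ∈ s, ∀ᵐ x ∂μ, f x = 0 ∨ k i x = 0) :
    ∀ᵐ x ∂μ, f x = 0 ∨ (∑ i ∈ s, k i : Lp E 1 μ) x = 0 := by
  classical
  induction s using Finset.induction_on with
  | empty =>
    filter_upwards [Lp.coeFn_zero E 1 μ] with x hzero
    exact .inr (by rw [Finset.sum_empty, hzero, Pi.zero_apply])
  | insert i s hi ih =>
    rw [Finset.sum_insert hi]
    exact ae_disjoint_add_right (h i (s.mem_insert_self i))
      (ih fun j hj => h j (Finset.mem_insert_of_mem hj))

theorem ae_disjoint_smul {𝕜 : Type*} [NormedRing 𝕜] [Module 𝕜 E] [IsBoundedSMul 𝕜 E]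
    {f k : Lp E 1 μ} (h : ∀ᵐ x ∂μ, f x = 0 ∨ k x = 0) (c d : 𝕜) :
    ∀ᵐ x ∂μ, (c • f : Lp E 1 μ) x = 0 ∨ (d • k : Lp E 1 μ) x = 0 := by
  filter_upwards [h, Lp.coeFn_smul c f, Lp.coeFn_smul d k] with x hx hf hk
  rw [hf, hk, Pi.smul_apply, Pi.smul_apply]
  rcases hx with hx | hx
  · exact .inl (by rw [hx, smul_zero])
  · exact .inr (by rw [hx, smul_zero])

theorem norm_sum_of_pairwise_ae_disjoint {ι : Type*} {k : ι → Lp E 1 μ} {s : Finset ι}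
    (h : (s : Set ι).Pairwise fun i j => ∀ᵐ x ∂μ, k i x = 0 ∨ k j x = 0) :
    ‖∑ i ∈ s, k i‖ = ∑ i ∈ s, ‖k i‖ := by
  classical
  induction s using Finset.induction_on with
  | empty => simp
  | insert i s hi ih =>
    rw [Finset.coe_insert, Set.pairwise_insert] at h
    rw [Finset.sum_insert hi, Finset.sum_insert hi, ← ih h.1, norm_add_of_ae_disjoint]
    exact ae_disjoint_sum_right fun j hj => (h.2 j hj fun hij => hi (hij ▸ hj)).1

section Series

variable [NormedSpace ℝ E] {g : ℕ → Lp E 1 μ}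
  (hg : Pairwise fun m n => ∀ᵐ x ∂μ, g m x = 0 ∨ g n x = 0)
include hg

theorem norm_sum_smul_of_pairwise_ae_disjoint (a : ℕ → ℝ) (s : Finset ℕ) :
    ‖∑ n ∈ s, a n • g n‖ = ∑ n ∈ s, |a n| * ‖g n‖ := by
  rw [norm_sum_of_pairwise_ae_disjoint fun i _ j _ hij => ae_disjoint_smul (hg hij) (a i) (a j)]
  simp only [norm_smul, Real.norm_eq_abs]

theorem hasSum_norm_of_pairwise_ae_disjoint {a : ℕ → ℝ} {h : Lp E 1 μ}
    (hh : HasSum (fun n => a n • g n) h) : HasSum (fun n => |a n| * ‖g n‖) ‖h‖ := by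
  refine (hasSum_iff_tendsto_nat_of_nonneg (fun n => by positivity) _).2 ?_
  simpa only [norm_sum_smul_of_pairwise_ae_disjoint hg] using hh.tendsto_sum_nat.norm

theorem norm_add_norm_sub_two_mul_le {m : ℕ} {s : Finset ℕ} (hm : m ∉ s) (a : ℕ → ℝ)
    (h : Lp E 1 μ) : ‖g m‖ + ‖h‖ - 2 * ‖h - ∑ n ∈ s, a n • g n‖ ≤ ‖g m - h‖ := by
  set p := ∑ n ∈ s, a n • g n
  have hdisj : ‖g m - p‖ = ‖g m‖ + ‖p‖ := by
    refine norm_sub_of_ae_disjoint (ae_disjoint_sum_right fun n hn => ?_)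
    filter_upwards [ae_disjoint_smul (hg (ne_of_mem_of_not_mem hn hm).symm) (1 : ℝ) (a n)]
      with x hx
    rwa [one_smul] at hx
  linarith [norm_sub_le_norm_sub_add_norm_sub (g m) h p, norm_le_norm_add_norm_sub' h p]

theorem tendsto_norm_sub_sub_norm_of_hasSum {a : ℕ → ℝ} {h : Lp E 1 μ}
    (hh : HasSum (fun n => a n • g n) h) :
    Tendsto (fun m => ‖g m - h‖ - ‖g m‖) atTop (𝓝 ‖h‖) := by
  refine tendsto_order.2 ⟨fun b hb => ?_, fun b hb => .of_forall fun m => ?_⟩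
  · have hclose : ∀ᶠ N in atTop, ‖h - ∑ n ∈ Finset.range N, a n • g n‖ < (‖h‖ - b) / 2 := by
      have := tendsto_iff_norm_sub_tendsto_zero.1 hh.tendsto_sum_nat
      exact (this.eventually (gt_mem_nhds (show (0 : ℝ) < (‖h‖ - b) / 2 by linarith))).mono fun N hN => by rwa [norm_sub_rev]
    obtain ⟨N, hN⟩ := hclose.exists
    filter_upwards [eventually_ge_atTop N] with m hm
    have := norm_add_norm_sub_two_mul_le hg (s := Finset.range N) (by simpa using hm) a h
    linarith
  · linarith [norm_sub_le (g m) h]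

end Series

end MeasureTheory.Lp

open MeasureTheory.Lp

theorem ae_tendsto_zero_of_pairwise_ae_disjoint {α E : Type*} {m : MeasurableSpace α}
    {μ : Measure α} [Zero E] [TopologicalSpace E] {g : ℕ → α → E}
    (hg : Pairwise fun m n => ∀ᵐ x ∂μ, g m x = 0 ∨ g n x = 0) :
    ∀ᵐ x ∂μ, Tendsto (fun n => g n x) atTop (𝓝 0) := by
  have hall : ∀ᵐ x ∂μ, ∀ m n, m ≠ n → g m x = 0 ∨ g n x = 0 := by
    simp only [ae_all_iff]
    exact fun m n hmn => hg hmn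
  filter_upwards [hall] with x hx
  refine tendsto_const_nhds.congr' ?_
  by_cases hex : ∃ n₀, g n₀ x ≠ 0
  · obtain ⟨n₀, hn₀⟩ := hex
    filter_upwards [eventually_gt_atTop n₀] with n hn
    exact ((hx n₀ n hn.ne).resolve_left hn₀).symm
  · push Not at hex
    exact .of_forall fun n => (hex n).symm

theorem sInf_limsup_norm_sub_le_two_mul {E : Type*} [SeminormedAddCommGroup E] {C : Set E}
    (hC : Bornology.IsBounded C) {xs : ℕ → E} (hxs : ∀ n, xs n ∈ C) (x : E) :
    sInf ((fun c => limsup (fun n => ‖c - xs n‖) atTop) '' C) ≤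
      2 * limsup (fun n => ‖x - xs n‖) atTop := by
  obtain ⟨R, hR⟩ := isBounded_iff_forall_norm_le.1 hC
  have hbdd : ∀ y : E, IsBoundedUnder (· ≤ ·) atTop fun n => ‖y - xs n‖ := fun y =>
    isBoundedUnder_of ⟨‖y‖ + R, fun n => (norm_sub_le _ _).trans (by linarith [hR _ (hxs n)])⟩
  have hnonneg : BddBelow ((fun c => limsup (fun n => ‖c - xs n‖) atTop) '' C) := by
    refine ⟨0, ?_⟩
    rintro _ ⟨c, -, rfl⟩
    exact le_limsup_of_frequently_le (.of_forall fun n => norm_nonneg _) (hbdd c)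
  set L := limsup (fun n => ‖x - xs n‖) atTop
  refine le_of_forall_pos_lt_add fun ε hε => ?_
  have hnear : ∀ᶠ n in atTop, ‖x - xs n‖ < L + ε / 4 :=
    eventually_lt_of_limsup_lt (by linarith) (hbdd x)
  obtain ⟨N, hN⟩ := hnear.exists
  have hxN : limsup (fun n => ‖xs N - xs n‖) atTop ≤ 2 * L + ε / 2 := by
    refine limsup_le_of_le (isCoboundedUnder_le_of_le atTop fun n => norm_nonneg _) ?_
    filter_upwards [hnear] with n hn
    linarith [norm_sub_le_norm_sub_add_norm_sub (xs N) x (xs n), norm_sub_rev (xs N) x]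
  linarith [csInf_le hnonneg ⟨xs N, hxs N, rfl⟩]

theorem le_tCoef {C : Set (Lp ℝ 1 μ01)} (hC : Bornology.IsBounded C) {xs : ℕ → Lp ℝ 1 μ01}
    (hxs : ∀ n, xs n ∈ C) {x : Lp ℝ 1 μ01}
    (hx : ∀ᵐ y ∂μ01, Tendsto (fun n => xs n y) atTop (𝓝 (x y)))
    (hpos : 0 < limsup (fun n => ‖x - xs n‖) atTop) {t : ℝ}
    (ht : ∀ c ∈ C, t * limsup (fun n => ‖x - xs n‖) atTop ≤ limsup (fun n => ‖c - xs n‖) atTop) :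
    t ≤ tCoef C := by
  refine le_csInf ⟨2, ?_⟩ ?_
  · exact ⟨zero_le_two, fun ys y hys _ => sInf_limsup_norm_sub_le_two_mul hC hys y⟩
  rintro l ⟨-, hl⟩
  refine le_of_mul_le_mul_right ((le_csInf ⟨_, Set.mem_image_of_mem _ (hxs 0)⟩ ?_).trans (hl xs x hxs hx)) hpos
  rintro _ ⟨c, hc, rfl⟩
  exact ht c hc

section Ct

variable {g : ℕ → Lp ℝ 1 μ01} {t : ℝ}

theorem mem_Ct_self {n : ℕ} (hn : n ≠ 0) : g n ∈ Ct g t := by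
  refine ⟨fun k => if k = n then 1 else 0, fun k => by positivity, tsum_ite_eq n _, ?_⟩
  have htail : ∑' k : ℕ, (if k + 1 = n then (1 : ℝ) else 0) • g (k + 1) = g n := by
    rw [tsum_eq_single (n - 1) fun k hk => by rw [if_neg (by omega), zero_smul],
      if_pos (by omega), one_smul, Nat.sub_add_cancel (Nat.pos_of_ne_zero hn)]
  simp only [if_neg hn.symm, mul_zero, zero_smul, zero_add, htail]

theorem exists_hasSum_of_mem_Ct (hnorm : ∀ n, ‖g n‖ = 1) {h : Lp ℝ 1 μ01} (hh : h ∈ Ct g t) :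
    ∃ s : ℕ → ℝ, (∀ n, 0 ≤ s n) ∧ HasSum s 1 ∧
      HasSum (fun n => Function.update s 0 ((t - 1) * s 0) n • g n) h := by
  obtain ⟨s, hs₀, hs₁, rfl⟩ := hh
  have hs : Summable s := by
    by_contra hns
    simp [tsum_eq_zero_of_not_summable hns] at hs₁
  refine ⟨s, hs₀, hs₁ ▸ hs.hasSum, (hasSum_nat_add_iff' 1).1 ?_⟩
  have htail : Summable fun n => s (n + 1) • g (n + 1) := by
    refine .of_norm ?_
    simpa [norm_smul, hnorm, abs_of_nonneg (hs₀ _)] using (summable_nat_add_iff 1).2 hs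
  simpa using htail.hasSum

theorem norm_mem_Icc_of_mem_Ct (hnorm : ∀ n, ‖g n‖ = 1)
    (hg : Pairwise fun m n => ∀ᵐ x ∂μ01, g m x = 0 ∨ g n x = 0) (ht : t ∈ Set.Icc 0 2)
    {h : Lp ℝ 1 μ01} (hh : h ∈ Ct g t) : ‖h‖ ∈ Set.Icc (t - 1) 1 := by
  obtain ⟨s, hs₀, hs, hh⟩ := exists_hasSum_of_mem_Ct hnorm hh
  have habs : (fun n => |Function.update s 0 ((t - 1) * s 0) n| * ‖g n‖) =
      Function.update s 0 (|t - 1| * s 0) := by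
    funext n
    rcases n with _ | n
    · simp [abs_mul, abs_of_nonneg (hs₀ 0), hnorm]
    · simp [abs_of_nonneg (hs₀ _), hnorm]
  have hnorm_eq : ‖h‖ = |t - 1| * s 0 - s 0 + 1 :=
    (habs ▸ hasSum_norm_of_pairwise_ae_disjoint hg hh).unique (hs.update 0 _)
  have hs₀le : s 0 ≤ 1 := le_hasSum hs 0 fun j _ => hs₀ j
  have := hs₀ 0
  obtain ⟨ht₀, ht₂⟩ := ht
  constructor <;> cases abs_cases (t - 1) <;> nlinarith

theorem tendsto_norm_sub_of_mem_Ct (hnorm : ∀ n, ‖g n‖ = 1)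
    (hg : Pairwise fun m n => ∀ᵐ x ∂μ01, g m x = 0 ∨ g n x = 0) {h : Lp ℝ 1 μ01}
    (hh : h ∈ Ct g t) : Tendsto (fun n => ‖g n - h‖) atTop (𝓝 (1 + ‖h‖)) := by
  obtain ⟨s, -, -, hh⟩ := exists_hasSum_of_mem_Ct hnorm hh
  simpa [hnorm] using (tendsto_norm_sub_sub_norm_of_hasSum hg hh).const_add 1

end Ct

/-- The sequence `(g_n)_{n≥2}` lies in `C_t`, converges to `0` a.e., has
`limsup ‖g_n - 0‖ = 1`, and `limsup ‖g_n - h‖ ≥ t` for every `h ∈ C_t`; consequently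
`t(C_t) ≥ t`. -/
theorem tCoef_Ct_ge
    (g : ℕ → Lp ℝ 1 μ01) (hnorm : ∀ n, ‖g n‖ = 1)
    (hdisj : ∀ m n : ℕ, m ≠ n → ∀ᵐ x ∂μ01, (g m : ℝ → ℝ) x = 0 ∨ (g n : ℝ → ℝ) x = 0)
    (t : ℝ) (ht : t ∈ Set.Ioo (1 : ℝ) 2) :
    (∀ n : ℕ, 1 ≤ n → g n ∈ Ct g t) ∧
    (∀ᵐ x ∂μ01, Tendsto (fun n => (g (n + 1) : ℝ → ℝ) x) atTop (𝓝 0)) ∧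
    limsup (fun n => ‖g (n + 1) - 0‖) atTop = 1 ∧
    (∀ h ∈ Ct g t, t ≤ limsup (fun n => ‖g (n + 1) - h‖) atTop) ∧
    t ≤ tCoef (Ct g t) := by
  have ht' : t ∈ Set.Icc 0 2 := ⟨by linarith [ht.1], ht.2.le⟩
  have hlimsup : ∀ h ∈ Ct g t, limsup (fun n => ‖g (n + 1) - h‖) atTop = 1 + ‖h‖ :=
    fun h hh => ((tendsto_norm_sub_of_mem_Ct hnorm hdisj hh).comp (tendsto_add_atTop_nat 1)).limsup_eq
  have hfar : ∀ h ∈ Ct g t, t ≤ limsup (fun n => ‖g (n + 1) - h‖) atTop := fun h hh => by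
    linarith [hlimsup h hh, (norm_mem_Icc_of_mem_Ct hnorm hdisj ht' hh).1]
  have hzero : ∀ᵐ x ∂μ01, Tendsto (fun n => (g (n + 1) : ℝ → ℝ) x) atTop (𝓝 0) :=
    (ae_tendsto_zero_of_pairwise_ae_disjoint hdisj).mono fun x hx =>
      hx.comp (tendsto_add_atTop_nat 1)
  have hbdd : Bornology.IsBounded (Ct g t) :=
    isBounded_iff_forall_norm_le.2 ⟨1, fun h hh => (norm_mem_Icc_of_mem_Ct hnorm hdisj ht' hh).2⟩
  refine ⟨fun n hn => mem_Ct_self (by omega), hzero, by simp [hnorm], hfar, ?_⟩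
  refine le_tCoef hbdd (fun n => mem_Ct_self n.succ_ne_zero) (x := 0) ?_ (by simp [hnorm]) ?_
  · filter_upwards [hzero, Lp.coeFn_zero ℝ 1 μ01] with x hx hx0
    rwa [hx0]
  · intro c hc
    simpa [hnorm, norm_sub_rev c] using hfar c hc
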